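/- arXiv:1905.03102 — 6 statements merged into one kernel-verified Lean document; each statement's English description precedes it below -/
import Mathlib

section
/- Let G be a finite group acting on a commutative ring R, and let I ⊆ R be a G-stable ideal contained in the Jacobson radical of R. Then the two-sided ideal I⋊G = { Σ_{σ∈G} a(σ) e_σ : a(σ) ∈ I } of the twisted group ring R⋊G is contained in the Jacobson radical of R⋊G. -/
/-- The twisted group ring `R⋊G` of a commutative ring `R` with an action of a finite
group `G`, characterized axiomatically. -/
structure TwistedGroupRing (G R A : Type*) [Group G] [Fintype G] [CommRing R]
    [MulSemiringAction G R] [Ring A] where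
  ι : R →+* A
  e : G → A
  e_one : e 1 = 1
  e_mul : ∀ σ τ : G, e σ * e τ = e (σ * τ)
  comm : ∀ (σ : G) (r : R), e σ * ι r = ι (σ • r) * e σ
  repr : ∀ x : A, ∃! a : G → R, x = ∑ σ : G, ι (a σ) * e σ

/-! Since `R⋊G` is a finite left `R`-module, Nakayama's lemma shows that every `1 + y x` is
left invertible, i.e. `x ∈ J(R⋊G)`, whenever every `z x` lies in `J(R) • (R⋊G)`. For `x = ι r`
with `r ∈ J(R)` this holds because `e_σ ι(r) = ι(σ • r) e_σ` and ring automorphisms preserve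
`J(R)`. Hence `ι(J(R)) ⊆ J(R⋊G)`, and `I⋊G` lies in the two-sided ideal generated by `ι(I)`. -/

theorem Ring.smul_mem_jacobson {G R : Type*} [Group G] [Ring R] [MulSemiringAction G R] (σ : G)
    {r : R} (hr : r ∈ Ring.jacobson R) : σ • r ∈ Ring.jacobson R :=
  Ring.le_comap_jacobson (MulSemiringAction.toRingEquiv G R σ : R →+* R) hr

theorem Ring.mem_jacobson_of_forall_mul_mem_jacobson_smul_top {R A : Type*} [CommRing R] [Ring A]
    [Module R A] [IsScalarTower R A A] [Module.Finite R A] {x : A}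
    (hx : ∀ y : A, y * x ∈ Ring.jacobson R • (⊤ : Submodule R A)) : x ∈ Ring.jacobson A := by
  rw [← Ideal.jacobson_bot, Ideal.mem_jacobson_iff]
  intro y
  let φ : A →ₗ[R] A := LinearMap.mulRight R (y * x + 1)
  have hcover : (⊤ : Submodule R A) ≤ LinearMap.range φ ⊔ Ring.jacobson R • ⊤ := by
    intro z _
    have hz : z = φ z + -((z * y) * x) := by
      simp only [φ, LinearMap.mulRight_apply]
      noncomm_ring
    rw [hz]
    exact Submodule.add_mem_sup (LinearMap.mem_range_self φ z)
      (Submodule.neg_mem _ (hx (z * y)))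
  obtain ⟨z, hz⟩ := Submodule.le_of_le_smul_of_le_jacobson_bot Module.Finite.fg_top
    (Ideal.jacobson_bot (R := R)).ge hcover (Submodule.mem_top (x := (1 : A)))
  refine ⟨z, ?_⟩
  rw [Submodule.mem_bot, mul_assoc, ← mul_add_one, ← LinearMap.mulRight_apply (R := R), hz,
    sub_self]

namespace TwistedGroupRing

variable {G R A : Type*} [Group G] [Fintype G] [CommRing R] [MulSemiringAction G R] [Ring A]
  (T : TwistedGroupRing G R A)

theorem span_range_e [Module R A] (hsmul : ∀ (r : R) (a : A), r • a = T.ι r * a) :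
    Submodule.span R (Set.range T.e) = ⊤ := by
  refine eq_top_iff.mpr fun y _ => ?_
  obtain ⟨c, rfl⟩ := (T.repr y).exists
  refine Submodule.sum_mem _ fun σ _ => ?_
  rw [← hsmul]
  exact Submodule.smul_mem _ _ (Submodule.subset_span ⟨σ, rfl⟩)

theorem mul_ι_mem_jacobson_smul_top [Module R A]
    (hsmul : ∀ (r : R) (a : A), r • a = T.ι r * a)
    {r : R} (hr : r ∈ Ring.jacobson R) (y : A) :
    y * T.ι r ∈ Ring.jacobson R • (⊤ : Submodule R A) := by
  obtain ⟨c, rfl⟩ := (T.repr y).exists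
  rw [Finset.sum_mul]
  refine Submodule.sum_mem _ fun σ _ => ?_
  rw [mul_assoc, T.comm, ← mul_assoc, ← map_mul, ← hsmul]
  exact Submodule.smul_mem_smul
    (Ideal.mul_mem_left _ _ (Ring.smul_mem_jacobson σ hr)) Submodule.mem_top

theorem ι_mem_jacobson {r : R} (hr : r ∈ Ring.jacobson R) : T.ι r ∈ Ring.jacobson A := by
  let _ : Module R A := T.ι.toModule
  have hsmul : ∀ (r : R) (a : A), r • a = T.ι r * a := fun _ _ => rfl
  have : IsScalarTower R A A := ⟨fun _ _ _ => mul_assoc _ _ _⟩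
  have : Module.Finite R A :=
    ⟨T.span_range_e hsmul ▸ Submodule.fg_span (Set.finite_range T.e)⟩
  exact Ring.mem_jacobson_of_forall_mul_mem_jacobson_smul_top
    (T.mul_ι_mem_jacobson_smul_top hsmul hr)

end TwistedGroupRing

theorem twistedGroupRing_ideal_le_jacobson_general
    {G R A : Type*} [Group G] [Fintype G] [CommRing R]
    [MulSemiringAction G R] [Ring A]
    (T : TwistedGroupRing G R A)
    (I : Ideal R)
    (hI : I ≤ Ideal.jacobson ⊥) :
    ∀ a : G → R, (∀ σ : G, a σ ∈ I) →
      (∑ σ : G, T.ι (a σ) * T.e σ) ∈ Ideal.jacobson (⊥ : Ideal A) := by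
  intro a ha
  rw [Ideal.jacobson_bot] at hI ⊢
  exact Ideal.sum_mem _ fun σ _ => Ideal.mul_mem_right _ _ (T.ι_mem_jacobson (hI (ha σ)))

/-- If `I ⊆ R` is a `G`-stable ideal contained in the Jacobson radical of `R`, then
the two-sided ideal `I⋊G = { ∑ a(σ) e_σ : a(σ) ∈ I }` of the twisted group ring
`R⋊G` is contained in the Jacobson radical of `R⋊G`. -/
theorem twistedGroupRing_ideal_le_jacobson
    {G R A : Type*} [Group G] [Fintype G] [CommRing R]
    [MulSemiringAction G R] [Ring A]
    (T : TwistedGroupRing G R A)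
    (I : Ideal R) (hGI : ∀ (σ : G), ∀ x ∈ I, σ • x ∈ I)
    (hI : I ≤ Ideal.jacobson ⊥) :
    ∀ a : G → R, (∀ σ : G, a σ ∈ I) →
      (∑ σ : G, T.ι (a σ) * T.e σ) ∈ Ideal.jacobson (⊥ : Ideal A) :=
  twistedGroupRing_ideal_le_jacobson_general T I hI
end

section
/- Let G be a finite group acting on a commutative ring R and let I ⊆ R be a G-stable ideal. Then for every x ∈ I, the element x^{|G|} lies in the ideal of R generated by I^G = I ∩ R^G, where R^G denotes the subring of G-invariants. -/
/-!
Every `x ∈ I` is a root of the monic polynomial `p = ∏ (X - g • x)` over the orbit of `x`. Its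
coefficients are `G`-invariant since `G` permutes the factors, and all but the leading one lie
in `I` since `p ≡ X ^ deg p` modulo `I`. Hence `x ^ deg p = x ^ deg p - p(x)` lies in the ideal
generated by `I ∩ R^G`, and so does `x ^ |G|` because `deg p ≤ |G|`.
-/

open Polynomial

namespace Polynomial

variable {R : Type*} [CommRing R]

theorem pow_natDegree_mem_of_eval_eq_zero {p : R[X]} (hp : p.Monic) {x : R} (hx : p.eval x = 0)
    {J : Ideal R} (hJ : ∀ k < p.natDegree, p.coeff k ∈ J) : x ^ p.natDegree ∈ J := by
  have hsum : x ^ p.natDegree + ∑ k ∈ Finset.range p.natDegree, p.coeff k * x ^ k = 0 := by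
    rw [← hx, eval_eq_sum_range, Finset.sum_range_succ, hp.coeff_natDegree, one_mul, add_comm]
  rw [eq_neg_of_add_eq_zero_left hsum]
  exact J.neg_mem <| J.sum_mem fun k hk ↦ J.mul_mem_right _ (hJ k (Finset.mem_range.mp hk))

theorem natDegree_prod_X_sub_C_le {ι : Type*} (s : Finset ι) (f : ι → R) :
    (∏ i ∈ s, (X - C (f i))).natDegree ≤ s.card :=
  (natDegree_prod_le _ _).trans <| by
    simpa using Finset.sum_le_card_nsmul s _ 1 fun i _ ↦ natDegree_X_sub_C_le (f i)

theorem coeff_prod_X_sub_C_mem {ι : Type*} (s : Finset ι) (f : ι → R) {I : Ideal R}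
    (hf : ∀ i ∈ s, f i ∈ I) {k : ℕ} (hk : k < s.card) :
    (∏ i ∈ s, (X - C (f i))).coeff k ∈ I := by
  have hmap : (∏ i ∈ s, (X - C (f i))).map (Ideal.Quotient.mk I) = X ^ s.card := by
    rw [Polynomial.map_prod, ← Finset.prod_const]
    refine Finset.prod_congr rfl fun i hi ↦ ?_
    rw [Polynomial.map_sub, map_X, map_C, Ideal.Quotient.eq_zero_iff_mem.mpr (hf i hi), map_zero,
      sub_zero]
  rw [← Ideal.Quotient.eq_zero_iff_mem, ← coeff_map, hmap, coeff_X_pow, if_neg hk.ne]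

end Polynomial

section prodXSubSMul

variable {G R : Type*} [Group G] [Fintype G] [CommRing R] [MulSemiringAction G R]

theorem natDegree_prodXSubSMul_le (x : R) :
    (prodXSubSMul G R x).natDegree ≤ Fintype.card G := by
  classical
  unfold prodXSubSMul
  exact (natDegree_prod_X_sub_C_le _ _).trans <| Finset.card_univ.trans_le <|
    Fintype.card_le_of_surjective _ QuotientGroup.mk_surjective

theorem coeff_prodXSubSMul_mem {I : Ideal R} (hI : ∀ g : G, ∀ y ∈ I, g • y ∈ I) {x : R}
    (hx : x ∈ I) {k : ℕ} (hk : k < (prodXSubSMul G R x).natDegree) :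
    (prodXSubSMul G R x).coeff k ∈ I := by
  unfold prodXSubSMul at hk ⊢
  refine coeff_prod_X_sub_C_mem _ _ (fun q _ ↦ ?_) (hk.trans_le (natDegree_prod_X_sub_C_le _ _))
  induction q using QuotientGroup.induction_on with
  | H g => rw [MulAction.ofQuotientStabilizer_mk]; exact hI g x hx

end prodXSubSMul

/-- If `G` is a finite group acting on a commutative ring `R` and `I ⊆ R` is a
`G`-stable ideal, then for every `x ∈ I` the element `x^{|G|}` lies in the ideal of
`R` generated by `I^G = I ∩ R^G`. -/
theorem pow_card_mem_span_fixed
    {G R : Type*} [Group G] [Fintype G] [CommRing R] [MulSemiringAction G R]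
    (I : Ideal R) (hGI : ∀ (σ : G), ∀ x ∈ I, σ • x ∈ I) :
    ∀ x ∈ I, x ^ (Fintype.card G) ∈
      Ideal.span {r : R | r ∈ I ∧ ∀ σ : G, σ • r = r} := by
  intro x hx
  have hroot := pow_natDegree_mem_of_eval_eq_zero (prodXSubSMul.monic G R x)
    (prodXSubSMul.eval G R x) (J := Ideal.span {r : R | r ∈ I ∧ ∀ σ : G, σ • r = r})
    fun k hk ↦ Ideal.subset_span
      ⟨coeff_prodXSubSMul_mem hGI hx hk, fun σ ↦ prodXSubSMul.coeff G R x σ k⟩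
  exact Ideal.pow_mem_of_pow_mem _ hroot (natDegree_prodXSubSMul_le (G := G) x)
end

section
/- Let G be a finite group acting on a commutative ring R and let I ⊆ R be a finitely generated G-stable ideal. Then there exists M ≥ 1 such that I^M is contained in the ideal of R generated by I^G = I ∩ R^G. -/
/-!
Every `x ∈ I` is a root of the monic polynomial `∏ (X - g • x)` over its orbit. Its coefficients
are `G`-invariant, and since `I` is `G`-stable it is congruent to `X ^ n` modulo `I`; so its
non-leading coefficients lie in `I ∩ R^G`, and `x ^ n` lies in the ideal they generate. Hence `I`
lies in the radical of that ideal, and as `I` is finitely generated, a power of `I` lies in the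
ideal itself.
-/

open Polynomial

theorem Polynomial.pow_mem_of_map_mk_eq_X_pow {R : Type*} [CommRing R] {J : Ideal R}
    {p : R[X]} {n : ℕ} (hp : p.map (Ideal.Quotient.mk J) = X ^ n) {x : R}
    (hx : p.eval x = 0) : x ^ n ∈ J := by
  rw [← Ideal.Quotient.eq_zero_iff_mem, map_pow]
  simpa [eval_map_apply, hx] using (congrArg (eval (Ideal.Quotient.mk J x)) hp).symm

theorem Polynomial.map_mk_eq_X_pow_iff {R : Type*} [CommRing R] {J : Ideal R}
    {p : R[X]} {n : ℕ} :
    p.map (Ideal.Quotient.mk J) = X ^ n ↔ ∀ i, (p - X ^ n).coeff i ∈ J := by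
  have hker := ker_mapRingHom (Ideal.Quotient.mk J)
  rw [Ideal.mk_ker] at hker
  rw [← Ideal.mem_map_C_iff, ← hker, RingHom.mem_ker, map_sub, sub_eq_zero, coe_mapRingHom,
    Polynomial.map_pow, map_X]

section

variable {G R : Type*} [Group G] [CommRing R] [MulSemiringAction G R]

theorem map_mk_span_fixed_eq_X_pow {I : Ideal R} {p : R[X]} {n : ℕ}
    (hp : p.map (Ideal.Quotient.mk I) = X ^ n) (hfix : ∀ (σ : G) i, σ • p.coeff i = p.coeff i) :
    p.map (Ideal.Quotient.mk (Ideal.span {r : R | r ∈ I ∧ ∀ σ : G, σ • r = r})) = X ^ n := by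
  rw [map_mk_eq_X_pow_iff] at hp ⊢
  refine fun i => Ideal.subset_span ⟨hp i, fun σ => ?_⟩
  rw [coeff_sub, smul_sub, hfix, coeff_X_pow]
  split_ifs <;> simp

variable [Fintype G]

theorem prodXSubSMul_map_mk {I : Ideal R} (hGI : ∀ (σ : G), ∀ x ∈ I, σ • x ∈ I) {x : R}
    (hx : x ∈ I) : ∃ n, (prodXSubSMul G R x).map (Ideal.Quotient.mk I) = X ^ n := by
  classical
  refine ⟨Fintype.card (G ⧸ MulAction.stabilizer G x), ?_⟩
  rw [prodXSubSMul, Polynomial.map_prod, ← Finset.card_univ, ← Finset.prod_const]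
  refine Finset.prod_congr rfl fun g _ => ?_
  have hg : MulAction.ofQuotientStabilizer G x g ∈ I := by
    induction g using QuotientGroup.induction_on with
    | H g => exact hGI g x hx
  rw [Polynomial.map_sub, map_X, map_C, Ideal.Quotient.eq_zero_iff_mem.mpr hg, map_zero,
    sub_zero]

theorem le_radical_span_fixed {I : Ideal R} (hGI : ∀ (σ : G), ∀ x ∈ I, σ • x ∈ I) :
    I ≤ (Ideal.span {r : R | r ∈ I ∧ ∀ σ : G, σ • r = r}).radical := fun x hx =>
  let ⟨n, hn⟩ := prodXSubSMul_map_mk hGI hx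
  ⟨n, pow_mem_of_map_mk_eq_X_pow (map_mk_span_fixed_eq_X_pow hn (prodXSubSMul.coeff G R x))
    (prodXSubSMul.eval G R x)⟩

end

/-- If `G` is a finite group acting on a commutative ring `R` and `I ⊆ R` is a
finitely generated `G`-stable ideal, then there exists `M ≥ 1` such that `I^M` is
contained in the ideal of `R` generated by `I^G = I ∩ R^G`. -/
theorem exists_pow_le_span_fixed
    {G R : Type*} [Group G] [Fintype G] [CommRing R] [MulSemiringAction G R]
    (I : Ideal R) (hfg : I.FG) (hGI : ∀ (σ : G), ∀ x ∈ I, σ • x ∈ I) :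
    ∃ M : ℕ, 1 ≤ M ∧
      I ^ M ≤ Ideal.span {r : R | r ∈ I ∧ ∀ σ : G, σ • r = r} := by
  obtain ⟨k, hk⟩ := Ideal.exists_pow_le_of_le_radical_of_fg (le_radical_span_fixed hGI) hfg
  exact ⟨max k 1, le_max_right _ _, (Ideal.pow_le_pow_right (le_max_left _ _)).trans hk⟩
end

section
/- Let G be a finite group acting on a commutative ring R and let I ⊆ R be a finitely generated G-stable ideal. Then the radical of the ideal I^G · R (the ideal of R generated by I ∩ R^G) equals the radical of I. -/
/-!
For `x ∈ I`, the orbit polynomial `P = ∏ (X - g • x)` (over the distinct conjugates of `x`) is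
`G`-invariant and reduces to `X ^ n` modulo the `G`-stable ideal `I`, so the coefficients of
`P - X ^ n` lie in `I ∩ R^G`. Evaluating at `x`, where `P` vanishes, gives
`x ^ n = -(P - X ^ n)(x) ∈ I^G · R`.
-/

open Polynomial MulAction

lemma Polynomial.eval_mem_of_forall_coeff_mem {R : Type*} [CommRing R] {J : Ideal R} {p : R[X]}
    (hp : ∀ i, p.coeff i ∈ J) (x : R) : p.eval x ∈ J := by
  rw [eval_eq_sum_range]
  exact J.sum_mem fun i _ => J.mul_mem_right _ (hp i)

section OrbitPolynomial

variable {G R : Type*} [Group G] [Fintype G] [CommRing R] [MulSemiringAction G R]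

lemma prodXSubSMul_map_quotient_eq_X_pow {I : Ideal R} (hGI : ∀ (σ : G), ∀ x ∈ I, σ • x ∈ I)
    {x : R} (hx : x ∈ I) :
    (prodXSubSMul G R x).map (Ideal.Quotient.mk I) =
      X ^ Nat.card (G ⧸ stabilizer G x) := by
  classical
  have hfactor (q : G ⧸ stabilizer G x) :
      (X - C (ofQuotientStabilizer G x q)).map (Ideal.Quotient.mk I) = X := by
    induction q using Quotient.inductionOn with
    | h g =>
      rw [Polynomial.map_sub, map_X, map_C, ofQuotientStabilizer_mk,
        Ideal.Quotient.eq_zero_iff_mem.mpr (hGI g x hx), C_0, sub_zero]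
  rw [prodXSubSMul, Polynomial.map_prod, Finset.prod_congr rfl fun q _ => hfactor q,
    Finset.prod_const, Finset.card_univ, Nat.card_eq_fintype_card]

lemma pow_card_orbit_mem_span_fixed {I : Ideal R} (hGI : ∀ (σ : G), ∀ x ∈ I, σ • x ∈ I)
    {x : R} (hx : x ∈ I) :
    x ^ Nat.card (G ⧸ stabilizer G x) ∈
      Ideal.span {r : R | r ∈ I ∧ ∀ σ : G, σ • r = r} := by
  set n := Nat.card (G ⧸ stabilizer G x)
  set Q := prodXSubSMul G R x - X ^ n
  have hQ_mem (i : ℕ) : Q.coeff i ∈ I := by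
    rw [← Ideal.Quotient.eq_zero_iff_mem, ← coeff_map, Polynomial.map_sub,
      prodXSubSMul_map_quotient_eq_X_pow hGI hx, Polynomial.map_pow, map_X, sub_self, coeff_zero]
  have hQ_fixed (σ : G) (i : ℕ) : σ • Q.coeff i = Q.coeff i := by
    rw [coeff_sub, smul_sub, prodXSubSMul.coeff, coeff_X_pow]
    split_ifs <;> simp
  have hQ_eval : Q.eval x = -x ^ n := by
    simp [Q, prodXSubSMul.eval]
  rw [← neg_neg (x ^ n), ← hQ_eval]
  exact neg_mem <| eval_mem_of_forall_coeff_mem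
    (fun i => Ideal.subset_span (show Q.coeff i ∈ {r : R | r ∈ I ∧ ∀ σ : G, σ • r = r} from
      ⟨hQ_mem i, fun σ => hQ_fixed σ i⟩)) x

end OrbitPolynomial

theorem radical_span_fixed_eq_radical_general
    {G R : Type*} [Group G] [Fintype G] [CommRing R] [MulSemiringAction G R]
    (I : Ideal R) (hGI : ∀ (σ : G), ∀ x ∈ I, σ • x ∈ I) :
    (Ideal.span {r : R | r ∈ I ∧ ∀ σ : G, σ • r = r}).radical = I.radical := by
  refine le_antisymm (Ideal.radical_mono (Ideal.span_le.mpr fun r hr => hr.1)) ?_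
  rw [Ideal.radical_le_radical_iff]
  exact fun x hx => ⟨_, pow_card_orbit_mem_span_fixed hGI hx⟩

/-- If `G` is a finite group acting on a commutative ring `R` and `I ⊆ R` is a
finitely generated `G`-stable ideal, then the radical of the ideal `I^G · R`
(the ideal generated by `I ∩ R^G`) equals the radical of `I`. -/
theorem radical_span_fixed_eq_radical
    {G R : Type*} [Group G] [Fintype G] [CommRing R] [MulSemiringAction G R]
    (I : Ideal R) (hfg : I.FG) (hGI : ∀ (σ : G), ∀ x ∈ I, σ • x ∈ I) :
    (Ideal.span {r : R | r ∈ I ∧ ∀ σ : G, σ • r = r}).radical = I.radical :=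
  radical_span_fixed_eq_radical_general I hGI
end

section
/- Let A be a commutative ring and I an ideal of A contained in the Jacobson radical of A. Let n ≥ 0 and let g(t) ∈ I[t] be a polynomial of degree at most n. If a, b ∈ I both satisfy a(1+a)^n + g(a) = 0 and b(1+b)^n + g(b) = 0, then a = b; that is, a root in I of f(t) = t(1+t)^n + g(t), when it exists, is unique. -/
open Polynomial Finset

/-- Uniqueness of roots of the Hensel polynomials `t(1+t)^n + g(t)`: if `I` is an
ideal of a commutative ring `A` contained in the Jacobson radical, `g ∈ I[t]` has
degree ≤ n, and `a, b ∈ I` both satisfy `x(1+x)^n + g(x) = 0`, then `a = b`. -/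
theorem hensel_root_unique
    {A : Type*} [CommRing A] (I : Ideal A) (hI : I ≤ Ideal.jacobson ⊥)
    (n : ℕ) (g : A[X]) (hg : ∀ k : ℕ, g.coeff k ∈ I) (hdeg : g.degree ≤ n)
    (a b : A) (ha : a ∈ I) (hb : b ∈ I)
    (hra : a * (1 + a) ^ n + g.eval a = 0)
    (hrb : b * (1 + b) ^ n + g.eval b = 0) :
    a = b := by
  set f : A[X] := X * (1 + X) ^ n + g with hf
  have hfa : f.eval a = 0 := by simp [hf, hra]
  have hfb : f.eval b = 0 := by simp [hf, hrb]
  have hnd : f.natDegree < n + 2 := by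
    have hX1 : (1 + X : A[X]).natDegree ≤ 1 :=
      (natDegree_add_le _ _).trans (by simpa using natDegree_X_le)
    have hp : ((1 + X : A[X]) ^ n).natDegree ≤ n :=
      natDegree_pow_le.trans (by nlinarith)
    have h1 : (X * (1 + X) ^ n : A[X]).natDegree ≤ n + 1 :=
      natDegree_mul_le.trans (by have := natDegree_X_le (R := A); omega)
    have h2 : g.natDegree ≤ n := natDegree_le_iff_degree_le.mpr hdeg
    have h3 : f.natDegree ≤ n + 1 :=
      hf ▸ (natDegree_add_le _ _).trans (max_le h1 (h2.trans (Nat.le_succ n)))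
    omega
  set S : ℕ → A := fun k => ∑ i ∈ range k, a ^ i * b ^ (k - 1 - i) with hS
  set u : A := ∑ k ∈ range (n + 2), f.coeff k * S k with hu
  -- Claim 1: f.eval a - f.eval b = u * (a - b)
  have key : u * (a - b) = 0 := by
    have e1 : f.eval a = ∑ k ∈ range (n + 2), f.coeff k * a ^ k :=
      eval_eq_sum_range' hnd a
    have e2 : f.eval b = ∑ k ∈ range (n + 2), f.coeff k * b ^ k :=
      eval_eq_sum_range' hnd b
    have : u * (a - b) = f.eval a - f.eval b := by
      rw [e1, e2, hu, Finset.sum_mul, ← Finset.sum_sub_distrib]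
      refine Finset.sum_congr rfl fun k _ => ?_
      rw [hS, mul_assoc, geom_sum₂_mul, mul_sub]
    rw [this, hfa, hfb, sub_zero]
  -- S (k+2) ∈ I
  have hSmem : ∀ k : ℕ, S (k + 2) ∈ I := by
    intro k
    rw [hS]
    refine Ideal.sum_mem _ fun i _ => ?_
    rcases Nat.eq_zero_or_pos i with hi | hi
    · subst hi
      simp only [pow_zero, one_mul]
      have : k + 2 - 1 - 0 = k + 1 := by omega
      rw [this, pow_succ]
      exact I.mul_mem_left _ hb
    · obtain ⟨j, rfl⟩ := Nat.exists_eq_succ_of_ne_zero hi.ne'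
      rw [pow_succ]
      exact I.mul_mem_right _ (I.mul_mem_left _ ha)
  -- Claim 2: u - 1 ∈ I
  have humem : u - 1 ∈ I := by
    have hsplit : u = (∑ k ∈ range n, f.coeff (k + 2) * S (k + 2))
        + f.coeff 1 * S 1 + f.coeff 0 * S 0 := by
      rw [hu, Finset.sum_range_succ', Finset.sum_range_succ']
    have hS1 : S 1 = 1 := by simp [hS]
    have hS0 : S 0 = 0 := by simp [hS]
    have hc1 : f.coeff 1 = 1 + g.coeff 1 := by
      rw [hf, coeff_add]
      congr 1
      have : (X * (1 + X) ^ n : A[X]).coeff 1 = ((1 + X : A[X]) ^ n).coeff 0 :=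
        coeff_X_mul _ 0
      rw [this, coeff_zero_eq_eval_zero]
      simp
    have : u - 1 = (∑ k ∈ range n, f.coeff (k + 2) * S (k + 2)) + g.coeff 1 := by
      rw [hsplit, hS1, hS0, hc1]; ring
    rw [this]
    exact I.add_mem (Ideal.sum_mem _ fun k _ => I.mul_mem_left _ (hSmem k)) (hg 1)
  -- u is a unit
  have hunit : IsUnit u := by
    have := hI humem
    rw [Ideal.mem_jacobson_bot] at this
    have h := this 1
    rw [mul_one, sub_add_cancel] at h
    exact h
  -- conclude
  obtain ⟨v, hv⟩ := hunit
  have : a - b = 0 := by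
    have := congrArg (fun x => (↑v⁻¹ : A) * x) key
    simp only [mul_zero] at this
    rw [← mul_assoc, ← hv, ← Units.val_mul, inv_mul_cancel] at this
    simpa using this
  exact sub_eq_zero.mp this
end

section
/- Let (R, I) be a henselian pair and let R → S be a ring homomorphism mapping I isomorphically (as an ideal, i.e. bijectively) onto an ideal J ⊆ S. Then (S, J) is a henselian pair. -/
/-!
Henselianity of `(R, I)` amounts to the solvability in `I` of every equation `u + g(u) = 0` with
`g ∈ I[X]`. This condition only involves the multiplication and addition of `I`, so it is carried
from `I` onto `J` by `f`. A henselian pair solves these equations through the substitution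
`u = t / (1 + t)`, which turns `u + g(u)` into a lift of `t (1 + t)ⁿ`, monic up to a unit and with
the simple root `0` modulo `I`. Conversely, a root near `0` of any `q` with `q(0) ∈ J` and `q'(0)`
a unit is obtained from such an equation by the substitution `ε = q(0) q'(0)⁻¹ (u - 1)`.
-/

open Polynomial

theorem Polynomial.eval_eq_coeff_zero_add_coeff_one_mul_add_sq_mul {R : Type*} [CommRing R]
    (q : R[X]) (y : R) : q.eval y = q.coeff 0 + q.coeff 1 * y + y ^ 2 * q.divX.divX.eval y := by
  conv_lhs => rw [← X_mul_divX_add q, ← X_mul_divX_add q.divX]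
  simp only [eval_add, eval_mul, eval_X, eval_C, coeff_divX]
  ring

namespace Ideal

variable {R S : Type*} [CommRing R] [CommRing S]

/-- Gabber's criterion for `I` to be henselian as a nonunital ring, in the normal form
`u + g(u) = 0` with `g = ∑_{k<n} x_k X^k` rather than Gabber's `t (1 + t)ⁿ + g(t) = 0`. -/
def HenselianNonunital (I : Ideal R) : Prop :=
  ∀ (n : ℕ) (x : ℕ → R), (∀ k, x k ∈ I) → ∃ u ∈ I, u + ∑ k ∈ Finset.range n, x k * u ^ k = 0

namespace HenselianNonunital

variable {I : Ideal R} {J : Ideal S}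

theorem map (hI : I.HenselianNonunital) (f : R →+* S) (hmaps : Set.MapsTo f I J)
    (hsurj : Set.SurjOn f I J) : J.HenselianNonunital := by
  intro n y hy
  choose x hxI hfx using fun k => hsurj (hy k)
  obtain ⟨u, huI, hu⟩ := hI n x hxI
  refine ⟨f u, hmaps huI, ?_⟩
  simpa [hfx] using congrArg f hu

theorem le_jacobson_bot (hI : I.HenselianNonunital) : I ≤ jacobson ⊥ := by
  intro y hy
  refine mem_jacobson_bot.mpr fun s => ?_
  obtain ⟨u, -, hu⟩ := hI 2 (fun _ => y * s) fun _ => I.mul_mem_right s hy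
  -- `u + y s + y s u = 0` says `(y s + 1) (1 + u) = 1`
  refine IsUnit.of_mul_eq_one (1 + u) ?_
  simp only [Finset.sum_range_succ, Finset.sum_range_zero] at hu
  linear_combination hu

theorem exists_add_mul_eval_eq_zero (hI : I.HenselianNonunital) {c : R} (hc : c ∈ I)
    (g : R[X]) : ∃ u ∈ I, u + c * g.eval u = 0 := by
  obtain ⟨u, huI, hu⟩ := hI _ (C c * g).coeff fun k => by
    rw [coeff_C_mul]; exact I.mul_mem_right _ hc
  refine ⟨u, huI, ?_⟩
  rwa [← eval_C_mul, eval_eq_sum_range' (lt_add_one _)]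

theorem exists_root (hI : I.HenselianNonunital) (p : R[X]) (a₀ : R) (h₁ : p.eval a₀ ∈ I)
    (h₂ : IsUnit (p.derivative.eval a₀)) : ∃ a, p.IsRoot a ∧ a - a₀ ∈ I := by
  set q := taylor a₀ p
  obtain ⟨v, hv⟩ : IsUnit (q.coeff 1) := by rwa [taylor_coeff_one]
  have hr : q.coeff 0 * ↑v⁻¹ ∈ I := I.mul_mem_right _ (by rwa [taylor_coeff_zero])
  set r := q.coeff 0 * ↑v⁻¹
  -- at `ε = r (u - 1)`, `q(ε) = q(0) (u + r v⁻¹ (u - 1)² h(ε))` with `q = q(0) + v X + X² h`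
  obtain ⟨u, -, hu⟩ := hI.exists_add_mul_eval_eq_zero (I.mul_mem_right (↑v⁻¹) hr)
    ((X - 1) ^ 2 * q.divX.divX.comp (C r * (X - 1)))
  refine ⟨r * (u - 1) + a₀, ?_, by simpa using I.mul_mem_right _ hr⟩
  rw [IsRoot, ← taylor_eval, eval_eq_coeff_zero_add_coeff_one_mul_add_sq_mul, ← hv]
  simp only [eval_mul, eval_pow, eval_sub, eval_X, eval_one, eval_comp, eval_C] at hu
  linear_combination q.coeff 0 * hu + q.coeff 0 * (u - 1) * v.mul_inv

theorem henselianRing (hI : I.HenselianNonunital) : HenselianRing R I where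
  jac := hI.le_jacobson_bot
  is_henselian p _ a₀ h₁ h₂ := by
    have := isLocalHom_of_le_jacobson_bot I hI.le_jacobson_bot
    exact hI.exists_root p a₀ h₁ (isUnit_of_map_unit _ _ h₂)

end HenselianNonunital

end Ideal

section GabberPolynomial

variable {R S : Type*} [CommRing R] [CommRing S]

/-- `(1 + t) ^ (n + 1) * (u + ∑_{k<n} x_k u^k)` with `u = t / (1 + t)`, cleared of
denominators. -/
noncomputable def gabberPolynomial (n : ℕ) (x : ℕ → R) : R[X] :=
  X * (X + 1) ^ n + ∑ k ∈ Finset.range n, C (x k) * X ^ k * (X + 1) ^ (n + 1 - k)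

theorem natDegree_gabberPolynomial_le (n : ℕ) (x : ℕ → R) :
    (gabberPolynomial n x).natDegree ≤ n + 1 := by
  unfold gabberPolynomial
  refine natDegree_add_le_of_degree_le (by compute_degree; omega) ?_
  refine natDegree_sum_le_of_forall_le _ _ fun k hk => ?_
  have := Finset.mem_range.mp hk
  compute_degree
  omega

theorem map_gabberPolynomial (f : R →+* S) {n : ℕ} {x : ℕ → R} (hx : ∀ k, f (x k) = 0) :
    (gabberPolynomial n x).map f = X * (X + 1) ^ n := by
  simp [gabberPolynomial, Polynomial.map_sum, hx]

theorem eval_gabberPolynomial {n : ℕ} (x : ℕ → R) {t u : R} (h : (1 + t) * u = t) :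
    (gabberPolynomial n x).eval t =
      (1 + t) ^ (n + 1) * (u + ∑ k ∈ Finset.range n, x k * u ^ k) := by
  have hterm : ∀ k ∈ Finset.range n,
      (1 + t) ^ (n + 1) * (x k * u ^ k) = x k * t ^ k * (t + 1) ^ (n + 1 - k) := by
    intro k hk
    have hkn : k ≤ n + 1 := by rw [Finset.mem_range] at hk; omega
    calc (1 + t) ^ (n + 1) * (x k * u ^ k)
        = x k * ((1 + t) * u) ^ k * (1 + t) ^ (n + 1 - k) := by
          rw [mul_pow, ← pow_mul_pow_sub (1 + t) hkn]; ring
      _ = x k * t ^ k * (t + 1) ^ (n + 1 - k) := by rw [h, add_comm 1 t]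
  simp only [gabberPolynomial, eval_add, eval_mul, eval_pow, eval_X, eval_one, eval_finsetSum,
    eval_C]
  rw [mul_add, Finset.mul_sum, Finset.sum_congr rfl hterm]
  linear_combination (-(1 + t) ^ n) * h

end GabberPolynomial

namespace HenselianRing

variable {R : Type*} [CommRing R] {I : Ideal R} [HenselianRing R I]

theorem exists_root_of_isUnit_coeff (f : R[X]) {N : ℕ} (hdeg : f.natDegree ≤ N)
    (hN : IsUnit (f.coeff N)) (a₀ : R) (h₁ : f.eval a₀ ∈ I)
    (h₂ : IsUnit (Ideal.Quotient.mk I (f.derivative.eval a₀))) :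
    ∃ a, f.IsRoot a ∧ a - a₀ ∈ I := by
  obtain ⟨c, hc⟩ := hN
  have hmonic : (C ((c⁻¹ : Rˣ) : R) * f).Monic :=
    monic_of_natDegree_le_of_coeff_eq_one N ((natDegree_C_mul_le _ _).trans hdeg)
      (by rw [coeff_C_mul, ← hc, c.inv_mul])
  obtain ⟨a, ha, haI⟩ := HenselianRing.is_henselian (C ((c⁻¹ : Rˣ) : R) * f) hmonic a₀
    (by rw [eval_mul, eval_C]; exact I.mul_mem_left _ h₁)
    (by rw [derivative_C_mul, eval_mul, eval_C, map_mul]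
        exact ((c⁻¹).isUnit.map (Ideal.Quotient.mk I)).mul h₂)
  rw [IsRoot, eval_mul, eval_C, Units.mul_right_eq_zero] at ha
  exact ⟨a, ha, haI⟩

theorem exists_root_mem_of_map_eq {f : R[X]} {n : ℕ} (hdeg : f.natDegree ≤ n + 1)
    (hf : f.map (Ideal.Quotient.mk I) = X * (X + 1) ^ n) : ∃ a ∈ I, f.IsRoot a := by
  have := isLocalHom_of_le_jacobson_bot I HenselianRing.jac
  have hcoeff : Ideal.Quotient.mk I (f.coeff (n + 1)) = 1 := by
    rw [← coeff_map, hf, coeff_X_mul, coeff_X_add_one_pow, Nat.choose_self, Nat.cast_one]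
  have heval : Ideal.Quotient.mk I (f.eval 0) = 0 := by
    rw [← eval_zero_map, hf]; simp
  have hderiv : Ideal.Quotient.mk I (f.derivative.eval 0) = 1 := by
    rw [← eval_zero_map, ← derivative_map, hf]; simp
  obtain ⟨a, ha, haI⟩ := exists_root_of_isUnit_coeff f hdeg
    (isUnit_of_map_unit _ _ (hcoeff ▸ isUnit_one)) 0 (Ideal.Quotient.eq_zero_iff_mem.mp heval)
    (hderiv ▸ isUnit_one)
  exact ⟨a, by simpa using haI, ha⟩

variable (I) in
theorem henselianNonunital : I.HenselianNonunital := by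
  intro n x hx
  obtain ⟨t, htI, ht⟩ := exists_root_mem_of_map_eq (natDegree_gabberPolynomial_le n x)
    (map_gabberPolynomial _ fun k => Ideal.Quotient.eq_zero_iff_mem.mpr (hx k))
  obtain ⟨v, hv⟩ : IsUnit (1 + t) := by
    simpa [add_comm] using Ideal.mem_jacobson_bot.mp (jac htI) 1
  refine ⟨↑v⁻¹ * t, I.mul_mem_left _ htI, ?_⟩
  have h := eval_gabberPolynomial (n := n) x (u := ↑v⁻¹ * t)
    (by rw [← hv, v.mul_inv_cancel_left])
  rw [ht.eq_zero, ← hv] at h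
  exact (v.isUnit.pow _).mul_right_eq_zero.mp h.symm

end HenselianRing

/-- If `(R, I)` is a henselian pair and `R → S` is a ring homomorphism mapping `I`
bijectively onto an ideal `J ⊆ S`, then `(S, J)` is a henselian pair. -/
theorem henselianRing_of_ideal_iso
    {R S : Type*} [CommRing R] [CommRing S]
    (I : Ideal R) [HenselianRing R I]
    (f : R →+* S) (J : Ideal S)
    (hmaps : ∀ x ∈ I, f x ∈ J)
    (hbij : ∀ y ∈ J, ∃! x : R, x ∈ I ∧ f x = y) :
    HenselianRing S J :=
  ((HenselianRing.henselianNonunital I).map f (fun x hx => hmaps x hx)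
    fun y hy => (hbij y hy).exists).henselianRing
end
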